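/- For each m, if B is an R×R Hermitian positive definite matrix and S_m(ν) > 0 for all ν ∈ [0,1], then Ψ_K^{(m)}(B) is Hermitian positive definite for every positive integer K. -/

import Mathlib

open MeasureTheory ProbabilityTheory Matrix Complex Filter
open scoped ComplexOrder

noncomputable section

/-- The closed positive real half-line `[0,∞)` viewed as a subset of `ℂ`. -/
def RPlus : Set ℂ := (fun x : ℝ => (x : ℂ)) '' Set.Ici 0

/-- `δ_z`, the distance from `z` to `[0,∞)`. -/
def deltaZ (z : ℂ) : ℝ := Metric.infDist z RPlus

/-- The vector `d_R(ν) = (1, e^{2πiν}, …, e^{2πi(R−1)ν})ᵀ`. -/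
def dvec (R : ℕ) (ν : ℝ) : Fin R → ℂ :=
  fun r => Complex.exp (2 * Real.pi * Complex.I * ν * (r : ℕ))

/-- The normalized vector `a_R(ν) = d_R(ν)/√R`. -/
def avec (R : ℕ) (ν : ℝ) : Fin R → ℂ :=
  fun r => (Real.sqrt R : ℂ)⁻¹ * dvec R ν r

/-- The operator `Ψ_K^{(m)}` associated with a spectral density `S`:
`Ψ_K(B) = ∫₀¹ S(ν) (a_R(ν)ᴴ B a_R(ν)) d_K(ν) d_K(ν)ᴴ dν`. -/
def PsiOp (S : ℝ → ℝ) {R : ℕ} (K : ℕ) (B : Matrix (Fin R) (Fin R) ℂ) :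
    Matrix (Fin K) (Fin K) ℂ :=
  fun i j => ∫ ν in (0:ℝ)..1,
    (S ν : ℂ) * (star (avec R ν) ⬝ᵥ B.mulVec (avec R ν))
      * (dvec K ν i * (starRingEnd ℂ) (dvec K ν j))

/- ### Auxiliary lemmas -/

lemma continuous_dvec (R : ℕ) (r : Fin R) : Continuous fun ν : ℝ => dvec R ν r := by
  unfold dvec; fun_prop

lemma continuous_quad {R : ℕ} (B : Matrix (Fin R) (Fin R) ℂ) :
    Continuous fun ν : ℝ => star (avec R ν) ⬝ᵥ B.mulVec (avec R ν) := by
  simp only [dotProduct, mulVec, Pi.star_apply, avec, dvec]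
  fun_prop

lemma avec_ne_zero {R : ℕ} (hR : 0 < R) (ν : ℝ) : avec R ν ≠ 0 := by
  intro h
  have h0 := congrFun h ⟨0, hR⟩
  simp [avec, dvec, Real.sqrt_eq_zero', hR] at h0
  exact absurd h0 (by positivity)

lemma integral_exp_int (n : ℤ) (hn : n ≠ 0) :
    ∫ ν in (0:ℝ)..1, Complex.exp (2 * Real.pi * Complex.I * n * ν) = 0 := by
  have hc : (2 * (Real.pi:ℂ) * Complex.I * n) ≠ 0 := by
    simp [Real.pi_ne_zero, Complex.I_ne_zero, hn, Complex.ofReal_ne_zero]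
  rw [show (fun ν : ℝ => Complex.exp (2 * Real.pi * Complex.I * n * ν)) =
      fun ν : ℝ => Complex.exp ((2 * (Real.pi:ℂ) * Complex.I * n) * ν) from rfl,
    integral_exp_mul_complex hc]
  have h1 : (2 * (Real.pi:ℂ) * Complex.I * n) * (1:ℝ) = n * (2 * Real.pi * Complex.I) := by
    push_cast; ring
  have h0 : (2 * (Real.pi:ℂ) * Complex.I * n) * ((0:ℝ):ℂ) = 0 := by push_cast; ring
  rw [h1, h0, Complex.exp_int_mul_two_pi_mul_I, Complex.exp_zero, sub_self, zero_div]

lemma ortho (K : ℕ) (i j : Fin K) :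
    ∫ ν in (0:ℝ)..1, dvec K ν i * (starRingEnd ℂ) (dvec K ν j)
      = if i = j then 1 else 0 := by
  have key : ∀ ν : ℝ, dvec K ν i * (starRingEnd ℂ) (dvec K ν j)
      = Complex.exp (2 * Real.pi * Complex.I * ((i:ℕ) - (j:ℕ) : ℤ) * ν) := by
    intro ν
    simp only [dvec, ← Complex.exp_conj, ← Complex.exp_add]
    congr 1
    simp only [_root_.map_mul, Complex.conj_I, Complex.conj_ofReal, map_ofNat,
      Complex.conj_natCast]
    push_cast
    ring
  simp only [key]
  by_cases h : i = j
  · subst h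
    simp
  · have hn : ((i:ℕ) - (j:ℕ) : ℤ) ≠ 0 := by
      simp only [ne_eq, sub_eq_zero]
      exact_mod_cast fun hh => h (Fin.ext (by exact_mod_cast hh))
    have := integral_exp_int _ hn
    push_cast at this ⊢
    rw [this, if_neg h]

lemma conj_intervalIntegral (f : ℝ → ℂ) (a b : ℝ) :
    (starRingEnd ℂ) (∫ ν in a..b, f ν) = ∫ ν in a..b, (starRingEnd ℂ) (f ν) := by
  simp only [intervalIntegral, map_sub, ← integral_conj]

/-- If `B` is Hermitian positive definite and `S > 0` on `[0,1]`,
then `Ψ_K(B)` is Hermitian positive definite for every positive integer `K`. -/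
theorem statement2 (K R : ℕ) (hK : 0 < K) (hR : 0 < R) (S : ℝ → ℝ)
    (hScont : ContinuousOn S (Set.Icc 0 1)) (hSpos : ∀ ν ∈ Set.Icc (0:ℝ) 1, 0 < S ν)
    (B : Matrix (Fin R) (Fin R) ℂ) (hB : B.PosDef) :
    (PsiOp S K B).PosDef := by
  have hIcc : Set.uIcc (0:ℝ) 1 = Set.Icc 0 1 := Set.uIcc_of_le zero_le_one
  set quad : ℝ → ℂ := fun ν => star (avec R ν) ⬝ᵥ B.mulVec (avec R ν) with hquad_def
  have hqpos : ∀ ν : ℝ, 0 < quad ν := fun ν => hB.dotProduct_mulVec_pos (avec_ne_zero hR ν)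
  have hqim : ∀ ν : ℝ, (quad ν).im = 0 := fun ν => by
    have h := (Complex.lt_def.mp (hqpos ν)).2; simpa using h.symm
  have hqre : ∀ ν : ℝ, ((quad ν).re : ℂ) = quad ν := fun ν =>
    Complex.ext (by simp) (by simp [hqim ν])
  have hqrepos : ∀ ν : ℝ, 0 < (quad ν).re := fun ν => by
    have h := (Complex.lt_def.mp (hqpos ν)).1; simpa using h
  have hqcont : Continuous quad := continuous_quad B
  have hqrecont : Continuous fun ν => (quad ν).re := Complex.continuous_re.comp hqcont
  -- integrand components
  have hFcconj : ∀ ν : ℝ, (starRingEnd ℂ) ((S ν : ℂ) * quad ν) = (S ν : ℂ) * quad ν := by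
    intro ν
    rw [← hqre ν]
    simp [← Complex.ofReal_mul]
  have hFccont : ContinuousOn (fun ν => (S ν : ℂ) * quad ν) (Set.uIcc (0:ℝ) 1) := by
    rw [hIcc]
    exact (Complex.continuous_ofReal.comp_continuousOn hScont).mul hqcont.continuousOn
  have hfint : ∀ i j : Fin K, IntervalIntegrable
      (fun ν => (S ν : ℂ) * quad ν * (dvec K ν i * (starRingEnd ℂ) (dvec K ν j)))
      volume 0 1 := by
    intro i j
    exact (hFccont.mul (((continuous_dvec K i).mul
      ((continuous_dvec K j).star)).continuousOn)).intervalIntegrable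
  refine posDef_iff_dotProduct_mulVec.mpr ⟨?_, ?_⟩
  · -- Hermitian
    ext i j
    simp only [conjTranspose_apply, PsiOp, RCLike.star_def, ← hquad_def]
    rw [conj_intervalIntegral]
    congr 1
    funext ν
    simp only [_root_.map_mul, Complex.conj_conj, hFcconj ν, Complex.conj_ofReal,
      (Complex.conj_eq_iff_im.mpr (hqim ν) :
        (starRingEnd ℂ) (star (avec R ν) ⬝ᵥ B *ᵥ avec R ν) = star (avec R ν) ⬝ᵥ B *ᵥ avec R ν)]
    ring_nf
  · -- Positive definite
    intro x hx
    set g : ℝ → ℂ := fun ν => ∑ j, (starRingEnd ℂ) (dvec K ν j) * x j with hg_def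
    have hgcont : Continuous g := by
      apply continuous_finset_sum
      intro j _
      exact ((continuous_dvec K j).star).mul continuous_const
    have hcg : ∀ ν : ℝ, (starRingEnd ℂ) (g ν) = ∑ i, dvec K ν i * (starRingEnd ℂ) (x i) := by
      intro ν
      simp [hg_def, map_sum]
    -- Step 1: express the quadratic form as a single integral
    have hterm : ∀ i j : Fin K, (starRingEnd ℂ) (x i) *
        ((∫ ν in (0:ℝ)..1, (S ν : ℂ) * quad ν * (dvec K ν i * (starRingEnd ℂ) (dvec K ν j))) * x j)
        = ∫ ν in (0:ℝ)..1, (starRingEnd ℂ) (x i) *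
            ((S ν : ℂ) * quad ν * (dvec K ν i * (starRingEnd ℂ) (dvec K ν j)) * x j) := by
      intro i j
      rw [← intervalIntegral.integral_mul_const, ← intervalIntegral.integral_const_mul]
    have hint2 : ∀ i j : Fin K, IntervalIntegrable (fun ν => (starRingEnd ℂ) (x i) *
        ((S ν : ℂ) * quad ν * (dvec K ν i * (starRingEnd ℂ) (dvec K ν j)) * x j))
        volume 0 1 := fun i j => (((hfint i j).mul_const _).const_mul _)
    have hcontterm : ∀ i j : Fin K, ContinuousOn (fun ν => (starRingEnd ℂ) (x i) *
        ((S ν : ℂ) * quad ν * (dvec K ν i * (starRingEnd ℂ) (dvec K ν j)) * x j))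
        (Set.uIcc (0:ℝ) 1) := fun i j =>
      continuousOn_const.mul ((hFccont.mul (((continuous_dvec K i).mul
        ((continuous_dvec K j).star)).continuousOn)).mul continuousOn_const)
    have hint3 : ∀ i : Fin K, IntervalIntegrable (fun ν => ∑ j, (starRingEnd ℂ) (x i) *
        ((S ν : ℂ) * quad ν * (dvec K ν i * (starRingEnd ℂ) (dvec K ν j)) * x j))
        volume 0 1 := fun i =>
      (continuousOn_finset_sum _ (fun j _ => hcontterm i j)).intervalIntegrable
    have hQ1 : star x ⬝ᵥ (PsiOp S K B).mulVec x
        = ∫ ν in (0:ℝ)..1, ∑ i, ∑ j, (starRingEnd ℂ) (x i) *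
            ((S ν : ℂ) * quad ν * (dvec K ν i * (starRingEnd ℂ) (dvec K ν j)) * x j) := by
      have hexp : star x ⬝ᵥ (PsiOp S K B).mulVec x
          = ∑ i, ∑ j, (starRingEnd ℂ) (x i) * ((PsiOp S K B) i j * x j) := by
        simp [dotProduct, mulVec, Finset.mul_sum]
      have hPsi : ∀ i j : Fin K, PsiOp S K B i j
          = ∫ ν in (0:ℝ)..1, (S ν : ℂ) * quad ν * (dvec K ν i * (starRingEnd ℂ) (dvec K ν j)) :=
        fun i j => rfl
      rw [hexp]
      calc (∑ i, ∑ j, (starRingEnd ℂ) (x i) * ((PsiOp S K B) i j * x j))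
          = ∑ i, ∑ j, ∫ ν in (0:ℝ)..1, (starRingEnd ℂ) (x i) *
              ((S ν : ℂ) * quad ν * (dvec K ν i * (starRingEnd ℂ) (dvec K ν j)) * x j) :=
            Finset.sum_congr rfl fun i _ => Finset.sum_congr rfl fun j _ => by
              rw [hPsi]; exact hterm i j
        _ = ∑ i, ∫ ν in (0:ℝ)..1, ∑ j, (starRingEnd ℂ) (x i) *
              ((S ν : ℂ) * quad ν * (dvec K ν i * (starRingEnd ℂ) (dvec K ν j)) * x j) :=
            Finset.sum_congr rfl fun i _ =>
              (intervalIntegral.integral_finset_sum (fun j _ => hint2 i j)).symm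
        _ = ∫ ν in (0:ℝ)..1, ∑ i, ∑ j, (starRingEnd ℂ) (x i) *
              ((S ν : ℂ) * quad ν * (dvec K ν i * (starRingEnd ℂ) (dvec K ν j)) * x j) :=
            (intervalIntegral.integral_finset_sum (fun i _ => hint3 i)).symm
    -- Step 2: pointwise identity with a real-valued integrand
    have hpoint : ∀ ν : ℝ, (∑ i, ∑ j, (starRingEnd ℂ) (x i) *
        ((S ν : ℂ) * quad ν * (dvec K ν i * (starRingEnd ℂ) (dvec K ν j)) * x j))
        = ((S ν * (quad ν).re * Complex.normSq (g ν) : ℝ) : ℂ) := by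
      intro ν
      have h1 : (∑ i, ∑ j, (starRingEnd ℂ) (x i) *
          ((S ν : ℂ) * quad ν * (dvec K ν i * (starRingEnd ℂ) (dvec K ν j)) * x j))
          = (S ν : ℂ) * quad ν * ((starRingEnd ℂ) (g ν) * g ν) := by
        rw [hcg ν, hg_def]
        rw [Finset.sum_mul_sum, Finset.mul_sum]
        apply Finset.sum_congr rfl
        intro i _
        rw [Finset.mul_sum]
        apply Finset.sum_congr rfl
        intro j _
        ring
      rw [h1, mul_comm ((starRingEnd ℂ) (g ν)) (g ν), Complex.mul_conj,
        Complex.ofReal_mul, Complex.ofReal_mul, hqre ν]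
    have hQ : star x ⬝ᵥ (PsiOp S K B).mulVec x
        = ((∫ ν in (0:ℝ)..1, S ν * (quad ν).re * Complex.normSq (g ν) : ℝ) : ℂ) := by
      rw [hQ1]
      simp_rw [hpoint]
      exact intervalIntegral.integral_ofReal
    -- Step 3: orthonormality gives the value of ∫ |g|²
    have hortho : ∫ ν in (0:ℝ)..1, Complex.normSq (g ν) = ∑ j, Complex.normSq (x j) := by
      have hgg : ∀ ν : ℝ, ((Complex.normSq (g ν) : ℝ) : ℂ)
          = ∑ i, ∑ j, ((starRingEnd ℂ) (x i) * x j)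
              * (dvec K ν i * (starRingEnd ℂ) (dvec K ν j)) := by
        intro ν
        rw [← Complex.mul_conj (g ν), mul_comm, hcg ν, hg_def, Finset.sum_mul_sum]
        apply Finset.sum_congr rfl
        intro i _
        apply Finset.sum_congr rfl
        intro j _
        ring
      have hintg : ∀ i j : Fin K, IntervalIntegrable
          (fun ν => ((starRingEnd ℂ) (x i) * x j)
            * (dvec K ν i * (starRingEnd ℂ) (dvec K ν j))) volume 0 1 := by
        intro i j
        exact (continuous_const.mul ((continuous_dvec K i).mul
          ((continuous_dvec K j).star))).intervalIntegrable 0 1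
      have hintsum : ∀ i : Fin K, IntervalIntegrable (fun ν => ∑ j, ((starRingEnd ℂ) (x i) * x j)
          * (dvec K ν i * (starRingEnd ℂ) (dvec K ν j))) volume 0 1 := fun i =>
        (continuous_finset_sum _ (fun j _ => continuous_const.mul ((continuous_dvec K i).mul
          ((continuous_dvec K j).star)))).intervalIntegrable 0 1
      have hC : ((∫ ν in (0:ℝ)..1, Complex.normSq (g ν) : ℝ) : ℂ)
          = ((∑ j, Complex.normSq (x j) : ℝ) : ℂ) := by
        rw [← intervalIntegral.integral_ofReal]
        calc (∫ ν in (0:ℝ)..1, ((Complex.normSq (g ν) : ℝ) : ℂ))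
            = ∫ ν in (0:ℝ)..1, ∑ i, ∑ j, ((starRingEnd ℂ) (x i) * x j)
                * (dvec K ν i * (starRingEnd ℂ) (dvec K ν j)) := by simp_rw [hgg]
          _ = ∑ i, ∫ ν in (0:ℝ)..1, ∑ j, ((starRingEnd ℂ) (x i) * x j)
                * (dvec K ν i * (starRingEnd ℂ) (dvec K ν j)) :=
              intervalIntegral.integral_finset_sum (fun i _ => hintsum i)
          _ = ∑ i, ∑ j, ∫ ν in (0:ℝ)..1, ((starRingEnd ℂ) (x i) * x j)
                * (dvec K ν i * (starRingEnd ℂ) (dvec K ν j)) :=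
              Finset.sum_congr rfl fun i _ =>
                intervalIntegral.integral_finset_sum (fun j _ => hintg i j)
          _ = ∑ i, ∑ j, ((starRingEnd ℂ) (x i) * x j) * (if i = j then 1 else 0) :=
              Finset.sum_congr rfl fun i _ => Finset.sum_congr rfl fun j _ => by
                rw [intervalIntegral.integral_const_mul, ortho K i j]
          _ = ((∑ j, Complex.normSq (x j) : ℝ) : ℂ) := by
              push_cast
              simp [mul_ite, mul_one, mul_zero, Complex.normSq_eq_conj_mul_self]
      exact_mod_cast hC
    -- Step 4: strict positivity
    set u : ℝ → ℝ := fun ν => S ν * (quad ν).re with hu_def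
    have hucont : ContinuousOn u (Set.Icc 0 1) := hScont.mul hqrecont.continuousOn
    have hupos : ∀ ν ∈ Set.Icc (0:ℝ) 1, 0 < u ν := fun ν hν =>
      mul_pos (hSpos ν hν) (hqrepos ν)
    obtain ⟨ν₀, hν₀, hmin⟩ := isCompact_Icc.exists_isMinOn
      (Set.nonempty_Icc.mpr zero_le_one) hucont
    have hc : 0 < u ν₀ := hupos ν₀ hν₀
    have hnscont : Continuous fun ν => Complex.normSq (g ν) :=
      Complex.continuous_normSq.comp hgcont
    have hle : (∫ ν in (0:ℝ)..1, u ν₀ * Complex.normSq (g ν))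
        ≤ ∫ ν in (0:ℝ)..1, u ν * Complex.normSq (g ν) := by
      apply intervalIntegral.integral_mono_on zero_le_one
      · exact (continuous_const.mul hnscont).intervalIntegrable 0 1
      · refine ((hucont.mono (by rw [hIcc])).mul hnscont.continuousOn).intervalIntegrable
      · intro ν hν
        exact mul_le_mul_of_nonneg_right (hmin hν) (Complex.normSq_nonneg _)
    obtain ⟨j₀, hj₀⟩ := Function.ne_iff.mp hx
    have hsumpos : 0 < ∑ j, Complex.normSq (x j) :=
      Finset.sum_pos' (fun j _ => Complex.normSq_nonneg _)
        ⟨j₀, Finset.mem_univ _, Complex.normSq_pos.mpr hj₀⟩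
    rw [hQ, Complex.zero_lt_real]
    calc (0:ℝ) < u ν₀ * ∑ j, Complex.normSq (x j) := mul_pos hc hsumpos
      _ = ∫ ν in (0:ℝ)..1, u ν₀ * Complex.normSq (g ν) := by
          rw [intervalIntegral.integral_const_mul, hortho]
      _ ≤ ∫ ν in (0:ℝ)..1, u ν * Complex.normSq (g ν) := hle
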